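/- For any graph G of 3-parallel paths, the zero forcing number satisfies F(G) <= 3; moreover, the set consisting of the left-most vertex of each of the three parallel paths in any standard drawing of G is a zero forcing set. -/

import Mathlib

open SimpleGraph

/-- The set of vertices colored after `n` steps of the zero forcing process
starting from the initially colored set `F`. -/
def coloredAt {V : Type*} (G : SimpleGraph V) (F : Set V) : ℕ → Set V
  | 0 => F
  | n + 1 => coloredAt G F n ∪
      {w | ∃ u ∈ coloredAt G F n, G.Adj u w ∧
        ∀ x, G.Adj u x → x ≠ w → x ∈ coloredAt G F n}

/-- `F` is a zero forcing set of `G`. -/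
def IsForcingSet {V : Type*} (G : SimpleGraph V) (F : Set V) : Prop :=
  ∀ v, ∃ n, v ∈ coloredAt G F n

/-- The zero forcing number of `G`. -/
noncomputable def forcingNumber {V : Type*} (G : SimpleGraph V) [Fintype V] : ℕ :=
  sInf {k | ∃ F : Finset V, F.card = k ∧ IsForcingSet G ↑F}

/-- The step at which `v` gets colored. -/
noncomputable def kF {V : Type*} (G : SimpleGraph V) (F : Set V) (v : V) : ℕ :=
  sInf {n | v ∈ coloredAt G F n}

/-- `u` forces `w` in the forcing process started at `F`. -/
def Forces {V : Type*} (G : SimpleGraph V) (F : Set V) (u w : V) : Prop :=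
  G.Adj u w ∧ kF G F u < kF G F w ∧
    ∀ x, G.Adj u x → x ≠ w → kF G F x < kF G F w

/-- A chain set corresponding to the forcing set `F`: a partition of the vertex
set into `k` sequences, each starting at a vertex of `F`, in which every vertex
forces its successor. -/
def IsChainSet {V : Type*} {k : ℕ} (G : SimpleGraph V) (F : Set V)
    (R : Fin k → List V) : Prop :=
  (∀ i, R i ≠ []) ∧
  (∀ i (h : R i ≠ []), (R i).head h ∈ F) ∧
  (∀ i, (R i).Chain' (Forces G F)) ∧
  (∀ i, (R i).Nodup) ∧
  (∀ i j, i ≠ j → ∀ v, v ∈ R i → v ∉ R j) ∧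
  (∀ v, ∃ i, v ∈ R i)

/-- `u` precedes `v` in the chain (list) `L`. -/
def Precedes {V : Type*} (L : List V) (u v : V) : Prop :=
  ∃ p q : Fin L.length, (p : ℕ) < (q : ℕ) ∧ L.get p = u ∧ L.get q = v

/-- A standard drawing of `G` as a graph of `k` parallel paths: `k` vertex-disjoint
induced paths covering all vertices, drawn in the plane as parallel horizontal lines
(vertices placed injectively, each path on its own horizontal line with increasing
x-coordinates), such that the edges between different paths, drawn as straight-line
segments, do not cross each other. -/
structure ParallelPathsDrawing {V : Type*} (G : SimpleGraph V) (k : ℕ) where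
  paths : Fin k → List V
  pos : V → ℝ × ℝ
  nonempty : ∀ i, paths i ≠ []
  nodup : ∀ i, (paths i).Nodup
  disjoint : ∀ i j, i ≠ j → ∀ v, v ∈ paths i → v ∉ paths j
  cover : ∀ v, ∃ i, v ∈ paths i
  isPath : ∀ i, (paths i).Chain' G.Adj
  induced : ∀ i, ∀ a b : Fin (paths i).length,
      (a : ℕ) + 1 < (b : ℕ) → ¬ G.Adj ((paths i).get a) ((paths i).get b)
  inj : Function.Injective pos
  sameY : ∀ i, ∀ u ∈ paths i, ∀ v ∈ paths i, (pos u).2 = (pos v).2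
  diffY : ∀ i j, i ≠ j → ∀ u ∈ paths i, ∀ v ∈ paths j, (pos u).2 ≠ (pos v).2
  increasingX : ∀ i, ((paths i).map (fun v => (pos v).1)).Chain' (· < ·)
  noncross : ∀ u v u' v' : V, G.Adj u v → G.Adj u' v' →
      (∀ i, ¬ (u ∈ paths i ∧ v ∈ paths i)) →
      (∀ i, ¬ (u' ∈ paths i ∧ v' ∈ paths i)) →
      ({u, v} : Set V) ≠ {u', v'} →
      openSegment ℝ (pos u) (pos v) ∩ openSegment ℝ (pos u') (pos v') = ∅

/-- `G` admits a standard drawing with `k` parallel paths. -/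
def HasParallelDrawing {V : Type*} (G : SimpleGraph V) (k : ℕ) : Prop :=
  Nonempty (ParallelPathsDrawing G k)

/-- `G` is a graph of `k`-parallel paths: it admits a standard drawing with `k`
parallel paths and with no fewer. -/
def IsGraphOfParallelPaths {V : Type*} (G : SimpleGraph V) (k : ℕ) : Prop :=
  HasParallelDrawing G k ∧ ∀ j, 0 < j → j < k → ¬ HasParallelDrawing G j

noncomputable def xAt (A B : ℝ × ℝ) (y : ℝ) : ℝ := A.1 + (y - A.2) / (B.2 - A.2) * (B.1 - A.1)

lemma xAt_left (A B : ℝ × ℝ) : xAt A B A.2 = A.1 := by simp [xAt]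

lemma xAt_right (A B : ℝ × ℝ) (h : A.2 ≠ B.2) : xAt A B B.2 = B.1 := by
  unfold xAt; rw [div_self (sub_ne_zero.mpr (Ne.symm h))]; ring

lemma mem_openSegment_of_y (A B : ℝ × ℝ) (hy : A.2 < B.2) (y : ℝ)
    (h1 : A.2 < y) (h2 : y < B.2) : (xAt A B y, y) ∈ openSegment ℝ A B := by
  have hne : B.2 - A.2 ≠ 0 := by linarith
  set t : ℝ := (y - A.2) / (B.2 - A.2) with ht
  have ht0 : 0 < t := div_pos (by linarith) (by linarith)
  have ht1 : t < 1 := (div_lt_one (by linarith)).mpr (by linarith)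
  refine ⟨1 - t, t, by linarith, ht0, by ring, ?_⟩
  have : (1 - t) • A + t • B = ((1-t) * A.1 + t * B.1, (1-t) * A.2 + t * B.2) := rfl
  rw [this]
  have hyy : (1-t) * A.2 + t * B.2 = y := by
    have h' : t * (B.2 - A.2) = y - A.2 := by rw [ht]; field_simp
    linear_combination h'
  have hxx : (1-t) * A.1 + t * B.1 = xAt A B y := by
    simp only [xAt, ← ht]; ring
  rw [hxx, hyy]

/-- Key crossing lemma: two segments that are graphs over y on `[r,s]`,
strictly swapping x-order between r and s, meet in their open parts. -/
lemma seg_cross {P1 P2 Q1 Q2 : ℝ × ℝ} {r s : ℝ}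
    (hP : P1.2 < P2.2) (hQ : Q1.2 < Q2.2) (hrs : r < s)
    (hPr : P1.2 ≤ r) (hPs : s ≤ P2.2) (hQr : Q1.2 ≤ r) (hQs : s ≤ Q2.2)
    (h1 : xAt P1 P2 r < xAt Q1 Q2 r) (h2 : xAt Q1 Q2 s < xAt P1 P2 s) :
    (openSegment ℝ P1 P2 ∩ openSegment ℝ Q1 Q2).Nonempty := by
  set D : ℝ → ℝ := fun y => xAt P1 P2 y - xAt Q1 Q2 y with hD
  have hcont : ContinuousOn D (Set.Icc r s) := by
    apply Continuous.continuousOn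
    simp only [hD, xAt]
    fun_prop
  have h0 : (0:ℝ) ∈ Set.Ioo (D r) (D s) := ⟨by simp [hD]; linarith, by simp [hD]; linarith⟩
  obtain ⟨y, hy, hDy⟩ := intermediate_value_Ioo (le_of_lt hrs) hcont h0
  have hx : xAt P1 P2 y = xAt Q1 Q2 y := by
    have : xAt P1 P2 y - xAt Q1 Q2 y = 0 := hDy
    linarith
  refine ⟨(xAt P1 P2 y, y), mem_openSegment_of_y _ _ hP y (by linarith [hy.1]) (by linarith [hy.2]), ?_⟩
  rw [hx]
  exact mem_openSegment_of_y _ _ hQ y (by linarith [hy.1]) (by linarith [hy.2])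

/-- Two segments between the same two horizontal lines, with strictly
interleaved endpoints, cross. -/
lemma seg_cross_pair {A B C D : ℝ × ℝ} (hAB : A.2 < B.2) (hC : C.2 = A.2) (hD : D.2 = B.2)
    (h1 : A.1 < C.1) (h2 : D.1 < B.1) :
    (openSegment ℝ A B ∩ openSegment ℝ C D).Nonempty := by
  have hCD : C.2 < D.2 := by rw [hC, hD]; exact hAB
  refine seg_cross hAB hCD hAB le_rfl le_rfl (le_of_eq hC) (le_of_eq hD.symm) ?_ ?_
  · rw [xAt_left, ← hC, xAt_left]; exact h1
  · rw [xAt_right _ _ (ne_of_lt hAB), ← hD, xAt_right _ _ (ne_of_lt hCD)]; exact h2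

/-- The 3-cycle crossing lemma, ascending heights. -/
lemma cycle_asc {p q r a1 c1 a2 c2 a3 c3 : ℝ} (hpq : p < q) (hqr : q < r)
    (h1 : a2 < c1) (h2 : a3 < c2) (h3 : a1 < c3) :
    (openSegment ℝ (a1,p) (c1,q) ∩ openSegment ℝ (a3,r) (c3,p)).Nonempty ∨
    (openSegment ℝ (a2,q) (c2,r) ∩ openSegment ℝ (a3,r) (c3,p)).Nonempty := by
  have hpr : p < r := lt_trans hpq hqr
  set m := xAt (c3,p) (a3,r) q with hm
  rw [show openSegment ℝ ((a3,r) : ℝ × ℝ) (c3,p) = openSegment ℝ (c3,p) (a3,r) from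
    openSegment_symm ℝ _ _]
  rcases lt_or_ge a2 m with hcase | hcase
  · right
    refine seg_cross (P1 := (a2,q)) (P2 := (c2,r)) (Q1 := (c3,p)) (Q2 := (a3,r))
      hqr hpr hqr le_rfl le_rfl (le_of_lt hpq) le_rfl ?_ ?_
    · rw [show q = ((a2,q) : ℝ × ℝ).2 from rfl, xAt_left]; exact hcase
    · rw [show r = ((a3,r) : ℝ × ℝ).2 from rfl, xAt_right _ _ (ne_of_lt hpr),
        xAt_right _ _ (ne_of_lt hqr)]
      exact h2
  · left
    refine seg_cross (P1 := (a1,p)) (P2 := (c1,q)) (Q1 := (c3,p)) (Q2 := (a3,r))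
      hpq hpr hpq le_rfl le_rfl le_rfl (le_of_lt hqr) ?_ ?_
    · rw [show p = ((a1,p) : ℝ × ℝ).2 from rfl, xAt_left,
        show p = ((c3,p) : ℝ × ℝ).2 from rfl, xAt_left]
      exact h3
    · rw [show q = ((c1,q) : ℝ × ℝ).2 from rfl, xAt_right _ _ (ne_of_lt hpq)]
      exact lt_of_le_of_lt hcase h1

/-- The 3-cycle crossing lemma, descending heights. -/
lemma cycle_desc {p q r a1 c1 a2 c2 a3 c3 : ℝ} (hpq : q < p) (hqr : r < q)
    (h1 : a2 < c1) (h2 : a3 < c2) (h3 : a1 < c3) :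
    (openSegment ℝ (a1,p) (c1,q) ∩ openSegment ℝ (a3,r) (c3,p)).Nonempty ∨
    (openSegment ℝ (a2,q) (c2,r) ∩ openSegment ℝ (a3,r) (c3,p)).Nonempty := by
  have hpr : r < p := lt_trans hqr hpq
  set m := xAt (a3,r) (c3,p) q with hm
  rcases lt_or_ge a2 m with hcase | hcase
  · right
    rw [show openSegment ℝ ((a2,q) : ℝ × ℝ) (c2,r) = openSegment ℝ (c2,r) (a2,q) from
      openSegment_symm ℝ _ _, Set.inter_comm]
    refine seg_cross (P1 := (a3,r)) (P2 := (c3,p)) (Q1 := (c2,r)) (Q2 := (a2,q))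
      hpr hqr hqr le_rfl (le_of_lt hpq) le_rfl le_rfl ?_ ?_
    · rw [show r = ((a3,r) : ℝ × ℝ).2 from rfl, xAt_left,
        show r = ((c2,r) : ℝ × ℝ).2 from rfl, xAt_left]
      exact h2
    · rw [show q = ((a2,q) : ℝ × ℝ).2 from rfl, xAt_right _ _ (ne_of_lt hqr)]
      exact hcase
  · left
    rw [show openSegment ℝ ((a1,p) : ℝ × ℝ) (c1,q) = openSegment ℝ (c1,q) (a1,p) from
      openSegment_symm ℝ _ _, Set.inter_comm]
    refine seg_cross (P1 := (a3,r)) (P2 := (c3,p)) (Q1 := (c1,q)) (Q2 := (a1,p))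
      hpr hpq hpq (le_of_lt hqr) le_rfl le_rfl le_rfl ?_ ?_
    · rw [show q = ((c1,q) : ℝ × ℝ).2 from rfl, xAt_left]
      exact lt_of_le_of_lt hcase h1
    · rw [show p = ((a1,p) : ℝ × ℝ).2 from rfl, xAt_right _ _ (ne_of_lt hpq),
        show p = ((c3,p) : ℝ × ℝ).2 from rfl, xAt_right _ _ (ne_of_lt hpr)]
      exact h3


namespace ParallelPathsDrawing

variable {V : Type*} {G : SimpleGraph V} {k : ℕ} (Dr : ParallelPathsDrawing G k)

lemma x_lt (i : Fin k) (p q : Fin (Dr.paths i).length) (hpq : (p : ℕ) < (q : ℕ)) :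
    (Dr.pos ((Dr.paths i).get p)).1 < (Dr.pos ((Dr.paths i).get q)).1 := by
  have hpw := List.isChain_iff_pairwise.mp (Dr.increasingX i)
  rw [List.pairwise_iff_get] at hpw
  have := hpw ⟨p, by simpa using p.isLt⟩ ⟨q, by simpa using q.isLt⟩ (by simpa using hpq)
  simpa using this

lemma adj_idx (i : Fin k) (p q : Fin (Dr.paths i).length)
    (h : G.Adj ((Dr.paths i).get p) ((Dr.paths i).get q)) :
    (q : ℕ) = (p : ℕ) + 1 ∨ (p : ℕ) = (q : ℕ) + 1 := by
  rcases lt_trichotomy (p : ℕ) (q : ℕ) with hlt | heq | hgt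
  · left; by_contra hne; exact Dr.induced i p q (by omega) h
  · exact absurd h (by rw [Fin.ext heq]; exact G.irrefl)
  · right; by_contra hne; exact Dr.induced i q p (by omega) h.symm

lemma cross_edge (i j : Fin k) (hij : i ≠ j) (u w : V) (hu : u ∈ Dr.paths i)
    (hw : w ∈ Dr.paths j) : ∀ m, ¬ (u ∈ Dr.paths m ∧ w ∈ Dr.paths m) := by
  rintro m ⟨h1, h2⟩
  by_cases hmi : m = i
  · subst hmi; exact Dr.disjoint m j hij w h2 hw
  · exact Dr.disjoint i m (Ne.symm hmi) u hu h1

lemma no_two_cycle (A B : Fin k) (hAB : A ≠ B) (uA wA uB wB : V)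
    (huA : uA ∈ Dr.paths A) (hwA : wA ∈ Dr.paths B)
    (huB : uB ∈ Dr.paths B) (hwB : wB ∈ Dr.paths A)
    (adjA : G.Adj uA wA) (adjB : G.Adj uB wB)
    (h1 : (Dr.pos uB).1 < (Dr.pos wA).1) (h2 : (Dr.pos uA).1 < (Dr.pos wB).1) : False := by
  have hyA : (Dr.pos wB).2 = (Dr.pos uA).2 := Dr.sameY A wB hwB uA huA
  have hyB : (Dr.pos wA).2 = (Dr.pos uB).2 := Dr.sameY B wA hwA uB huB
  have hyne : (Dr.pos uA).2 ≠ (Dr.pos uB).2 := Dr.diffY A B hAB uA huA uB huB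
  have hsetne : ({uA, wA} : Set V) ≠ {uB, wB} := by
    intro hset
    have : uA ∈ ({uB, wB} : Set V) := hset ▸ Set.mem_insert uA {wA}
    rcases this with h | h
    · exact Dr.disjoint A B hAB uA huA (h ▸ huB)
    · rw [h] at h2; exact lt_irrefl _ h2
  have hempty := Dr.noncross uA wA uB wB adjA adjB
    (Dr.cross_edge A B hAB uA wA huA hwA) (Dr.cross_edge B A (Ne.symm hAB) uB wB huB hwB)
    hsetne
  rcases hyne.lt_or_gt with hy | hy
  · have := seg_cross_pair (A := Dr.pos uA) (B := Dr.pos wA) (C := Dr.pos wB) (D := Dr.pos uB)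
      (by rw [hyB]; exact hy) hyA hyB.symm h2 h1
    rw [show openSegment ℝ (Dr.pos wB) (Dr.pos uB) = openSegment ℝ (Dr.pos uB) (Dr.pos wB) from
      openSegment_symm ℝ _ _, hempty] at this
    exact Set.not_nonempty_empty this
  · have := seg_cross_pair (A := Dr.pos uB) (B := Dr.pos wB) (C := Dr.pos wA) (D := Dr.pos uA)
      (by rw [hyA]; exact hy) hyB hyA.symm h1 h2
    rw [show openSegment ℝ (Dr.pos wA) (Dr.pos uA) = openSegment ℝ (Dr.pos uA) (Dr.pos wA) from
      openSegment_symm ℝ _ _] at this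
    rw [Set.inter_comm] at hempty
    rw [hempty] at this
    exact Set.not_nonempty_empty this


lemma no_cycle (A B C : Fin k) (hAB : A ≠ B) (hAC : A ≠ C) (hBC : B ≠ C)
    (uA wA uB wB uC wC : V)
    (huA : uA ∈ Dr.paths A) (hwA : wA ∈ Dr.paths B)
    (huB : uB ∈ Dr.paths B) (hwB : wB ∈ Dr.paths C)
    (huC : uC ∈ Dr.paths C) (hwC : wC ∈ Dr.paths A)
    (adjA : G.Adj uA wA) (adjB : G.Adj uB wB) (adjC : G.Adj uC wC)
    (hxA : (Dr.pos uB).1 < (Dr.pos wA).1)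
    (hxB : (Dr.pos uC).1 < (Dr.pos wB).1)
    (hxC : (Dr.pos uA).1 < (Dr.pos wC).1) : False := by
  have hyWA : (Dr.pos wA).2 = (Dr.pos uB).2 := Dr.sameY B wA hwA uB huB
  have hyWB : (Dr.pos wB).2 = (Dr.pos uC).2 := Dr.sameY C wB hwB uC huC
  have hyWC : (Dr.pos wC).2 = (Dr.pos uA).2 := Dr.sameY A wC hwC uA huA
  have hyAB : (Dr.pos uA).2 ≠ (Dr.pos uB).2 := Dr.diffY A B hAB uA huA uB huB
  have hyAC : (Dr.pos uA).2 ≠ (Dr.pos uC).2 := Dr.diffY A C hAC uA huA uC huC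
  have hyBC : (Dr.pos uB).2 ≠ (Dr.pos uC).2 := Dr.diffY B C hBC uB huB uC huC
  have qA : ((Dr.pos wA).1, (Dr.pos uB).2) = Dr.pos wA := by rw [← hyWA]
  have qB : ((Dr.pos wB).1, (Dr.pos uC).2) = Dr.pos wB := by rw [← hyWB]
  have qC : ((Dr.pos wC).1, (Dr.pos uA).2) = Dr.pos wC := by rw [← hyWC]
  have pA : ((Dr.pos uA).1, (Dr.pos uA).2) = Dr.pos uA := rfl
  have pB : ((Dr.pos uB).1, (Dr.pos uB).2) = Dr.pos uB := rfl
  have pC : ((Dr.pos uC).1, (Dr.pos uC).2) = Dr.pos uC := rfl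
  have hEAC : openSegment ℝ (Dr.pos uA) (Dr.pos wA) ∩
      openSegment ℝ (Dr.pos uC) (Dr.pos wC) = ∅ := by
    refine Dr.noncross uA wA uC wC adjA adjC (Dr.cross_edge A B hAB uA wA huA hwA)
      (Dr.cross_edge C A (Ne.symm hAC) uC wC huC hwC) ?_
    intro hset
    have : uA ∈ ({uC, wC} : Set V) := hset ▸ Set.mem_insert uA {wA}
    rcases this with h | h
    · exact Dr.disjoint A C hAC uA huA (h ▸ huC)
    · rw [h] at hxC; exact lt_irrefl _ hxC
  have hEBC : openSegment ℝ (Dr.pos uB) (Dr.pos wB) ∩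
      openSegment ℝ (Dr.pos uC) (Dr.pos wC) = ∅ := by
    refine Dr.noncross uB wB uC wC adjB adjC (Dr.cross_edge B C hBC uB wB huB hwB)
      (Dr.cross_edge C A (Ne.symm hAC) uC wC huC hwC) ?_
    intro hset
    have : uB ∈ ({uC, wC} : Set V) := hset ▸ Set.mem_insert uB {wB}
    rcases this with h | h
    · exact Dr.disjoint B C hBC uB huB (h ▸ huC)
    · exact Dr.disjoint B A (Ne.symm hAB) uB huB (h ▸ hwC)
  have hEAB : openSegment ℝ (Dr.pos uA) (Dr.pos wA) ∩
      openSegment ℝ (Dr.pos uB) (Dr.pos wB) = ∅ := by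
    refine Dr.noncross uA wA uB wB adjA adjB (Dr.cross_edge A B hAB uA wA huA hwA)
      (Dr.cross_edge B C hBC uB wB huB hwB) ?_
    intro hset
    have : uA ∈ ({uB, wB} : Set V) := hset ▸ Set.mem_insert uA {wA}
    rcases this with h | h
    · exact Dr.disjoint A B hAB uA huA (h ▸ huB)
    · exact Dr.disjoint A C hAC uA huA (h ▸ hwB)
  have fin : ∀ {s t : Set (ℝ × ℝ)}, s ∩ t = ∅ → (s ∩ t).Nonempty → False := by
    intro s t he hn; rw [he] at hn; exact Set.not_nonempty_empty hn
  rcases hyAB.lt_or_gt with h1 | h1 <;> rcases hyBC.lt_or_gt with h2 | h2 <;>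
    rcases hyAC.lt_or_gt with h3 | h3
  · -- yA < yB < yC : asc (A,B,C)
    rcases cycle_asc h1 h2 hxA hxB hxC with hcr | hcr
    · rw [pA, qA, pC, qC] at hcr; exact fin hEAC hcr
    · rw [pB, qB, pC, qC] at hcr; exact fin hEBC hcr
  · exact absurd (lt_trans h1 h2) (not_lt.mpr (le_of_lt h3))
  · -- yA < yC < yB : desc (B,C,A)
    rcases cycle_desc h2 h3 hxB hxC hxA with hcr | hcr
    · rw [pB, qB, pA, qA, Set.inter_comm] at hcr; exact fin hEAB hcr
    · rw [pC, qC, pA, qA, Set.inter_comm] at hcr; exact fin hEAC hcr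
  · -- yC < yA < yB : asc (C,A,B)
    rcases cycle_asc h3 h1 hxC hxA hxB with hcr | hcr
    · rw [pC, qC, pB, qB, Set.inter_comm] at hcr; exact fin hEBC hcr
    · rw [pA, qA, pB, qB] at hcr; exact fin hEAB hcr
  · -- yB < yA < yC : desc (C,A,B)
    rcases cycle_desc h3 h1 hxC hxA hxB with hcr | hcr
    · rw [pC, qC, pB, qB, Set.inter_comm] at hcr; exact fin hEBC hcr
    · rw [pA, qA, pB, qB] at hcr; exact fin hEAB hcr
  · -- yB < yC < yA : asc (B,C,A)
    rcases cycle_asc h2 h3 hxB hxC hxA with hcr | hcr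
    · rw [pB, qB, pA, qA, Set.inter_comm] at hcr; exact fin hEAB hcr
    · rw [pC, qC, pA, qA, Set.inter_comm] at hcr; exact fin hEAC hcr
  · exact absurd (lt_trans h2 h1) (not_lt.mpr (le_of_lt h3))
  · -- yC < yB < yA : desc (A,B,C)
    rcases cycle_desc h1 h2 hxA hxB hxC with hcr | hcr
    · rw [pA, qA, pC, qC] at hcr; exact fin hEAC hcr
    · rw [pB, qB, pC, qC] at hcr; exact fin hEBC hcr

end ParallelPathsDrawing

lemma coloredAt_mono {V : Type*} (G : SimpleGraph V) (F : Set V) {m n : ℕ} (h : m ≤ n) :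
    coloredAt G F m ⊆ coloredAt G F n := by
  induction n with
  | zero => have : m = 0 := Nat.le_zero.mp h; subst this; exact subset_rfl
  | succ n ih =>
    rcases Nat.lt_or_ge m (n + 1) with h' | h'
    · exact (ih (Nat.lt_succ_iff.mp h')).trans Set.subset_union_left
    · have : m = n + 1 := le_antisymm h h'
      subst this; exact subset_rfl

lemma fin3_eq {a b c d : Fin 3} (hab : a ≠ b) (hac : a ≠ c) (hbc : b ≠ c) (hdc : d ≠ c) :
    d = a ∨ d = b := by
  have ha := a.isLt; have hb := b.isLt; have hc := c.isLt; have hd := d.isLt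
  simp only [Ne, Fin.ext_iff] at *
  omega

lemma ParallelPathsDrawing.step {V : Type*} {G : SimpleGraph V} (Dr : ParallelPathsDrawing G 3)
    (S : Set V) (n : ℕ) (l : Fin 3 → ℕ)
    (h1 : ∀ i, 1 ≤ l i) (h2 : ∀ i, l i ≤ (Dr.paths i).length)
    (h3 : ∀ i (k : Fin (Dr.paths i).length), (k : ℕ) < l i → (Dr.paths i).get k ∈ coloredAt G S n)
    (i0 : Fin 3) (hi0 : l i0 < (Dr.paths i0).length) :
    ∃ i, l i < (Dr.paths i).length ∧
      ∀ (k : Fin (Dr.paths i).length), (k : ℕ) < l i + 1 →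
        (Dr.paths i).get k ∈ coloredAt G S (n + 1) := by
  have hl1 : ∀ i, l i - 1 < (Dr.paths i).length := fun i => by
    have := h1 i; have := h2 i; omega
  set u : Fin 3 → V := fun i => (Dr.paths i).get ⟨l i - 1, hl1 i⟩ with hu
  have humem : ∀ i, u i ∈ Dr.paths i := fun i => List.get_mem _ _
  have hucol : ∀ i, u i ∈ coloredAt G S n := fun i =>
    h3 i ⟨l i - 1, hl1 i⟩ (by simp only; have := h1 i; omega)
  by_cases hfound : ∃ i, ∃ hact : l i < (Dr.paths i).length,
      ∀ x, G.Adj (u i) x → x ≠ (Dr.paths i).get ⟨l i, hact⟩ → x ∈ coloredAt G S n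
  · obtain ⟨i, hact, hforce⟩ := hfound
    refine ⟨i, hact, ?_⟩
    intro k hk
    rcases Nat.lt_or_ge (k : ℕ) (l i) with hk' | hk'
    · exact Set.subset_union_left (h3 i k hk')
    · have hkk : (Dr.paths i).get k = (Dr.paths i).get ⟨l i, hact⟩ := by
        congr 1; exact Fin.ext (by simp only; omega)
      rw [hkk]
      have hadj : G.Adj (u i) ((Dr.paths i).get ⟨l i, hact⟩) := by
        have hadj' := List.isChain_iff_getElem.mp (Dr.isPath i) (l i - 1)
          (by have := h1 i; omega)
        have heq : (Dr.paths i).get ⟨l i - 1 + 1, by have := h1 i; omega⟩ =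
            (Dr.paths i).get ⟨l i, hact⟩ := by
          congr 1; exact Fin.ext (by simp only; have := h1 i; omega)
        rw [← heq]; exact hadj'
      exact Set.mem_union_right _ ⟨u i, hucol i, hadj, hforce⟩
  · exfalso
    push_neg at hfound
    -- for each active i, produce a "bad" cross edge
    have crux : ∀ i, l i < (Dr.paths i).length → ∃ j, j ≠ i ∧ l j < (Dr.paths j).length ∧
        ∃ w, w ∈ Dr.paths j ∧ G.Adj (u i) w ∧ (Dr.pos (u j)).1 < (Dr.pos w).1 := by
      intro i hact
      obtain ⟨w, hadj, hne, hncol⟩ := hfound i hact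
      obtain ⟨j, hwj⟩ := Dr.cover w
      obtain ⟨q, hq⟩ := List.mem_iff_get.mp hwj
      have hqge : l j ≤ (q : ℕ) := by
        by_contra hlt
        exact hncol (hq ▸ h3 j q (by omega))
      have hji : j ≠ i := by
        rintro rfl
        rcases Dr.adj_idx j ⟨l j - 1, hl1 j⟩ q (hq ▸ hadj) with h | h
        · simp only at h
          have : q = (⟨l j, hact⟩ : Fin (Dr.paths j).length) := Fin.ext (by
            simp only [h]; have := h1 j; omega)
          exact hne (by rw [← hq, this])
        · simp only at h; have := h1 j; omega
      refine ⟨j, hji, lt_of_le_of_lt hqge q.isLt, w, hwj, hadj, ?_⟩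
      have := Dr.x_lt j ⟨l j - 1, hl1 j⟩ q (by simp only; have := h1 j; omega)
      rw [hq] at this; exact this
    obtain ⟨j0, hj0i0, hj0act, w0, hw0mem, hw0adj, hw0x⟩ := crux i0 hi0
    obtain ⟨j1, hj1j0, hj1act, w1, hw1mem, hw1adj, hw1x⟩ := crux j0 hj0act
    by_cases hj1i0 : j1 = i0
    · exact Dr.no_two_cycle i0 j0 (Ne.symm hj0i0) (u i0) w0 (u j0) w1
        (humem i0) hw0mem (humem j0) (hj1i0 ▸ hw1mem) hw0adj hw1adj hw0x (hj1i0 ▸ hw1x)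
    · obtain ⟨j2, hj2j1, hj2act, w2, hw2mem, hw2adj, hw2x⟩ := crux j1 hj1act
      rcases fin3_eq (a := i0) (b := j0) (c := j1) (d := j2)
        (Ne.symm hj0i0) (fun h => hj1i0 h.symm) (fun h => hj1j0 h.symm) hj2j1 with h | h
      · exact Dr.no_cycle i0 j0 j1 (Ne.symm hj0i0) (fun h' => hj1i0 h'.symm)
          (fun h' => hj1j0 h'.symm) (u i0) w0 (u j0) w1 (u j1) w2
          (humem i0) hw0mem (humem j0) hw1mem (humem j1) (h ▸ hw2mem)
          hw0adj hw1adj hw2adj hw0x hw1x (h ▸ hw2x)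
      · exact Dr.no_two_cycle j0 j1 (fun h' => hj1j0 h'.symm) (u j0) w1 (u j1) w2
          (humem j0) hw1mem (humem j1) (h ▸ hw2mem) hw1adj hw2adj hw1x (h ▸ hw2x)



lemma forcing_key {V : Type*} (G : SimpleGraph V) (Dr : ParallelPathsDrawing G 3) :
    IsForcingSet G {v | ∃ i, (Dr.paths i).head? = some v} := by
  classical
  set S : Set V := {v | ∃ i, (Dr.paths i).head? = some v} with hS
  have hlenpos : ∀ i, 0 < (Dr.paths i).length := fun i =>
    List.length_pos_iff.mpr (Dr.nonempty i)
  have headsome : ∀ i, (Dr.paths i).head? = some ((Dr.paths i).get ⟨0, hlenpos i⟩) := by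
    intro i
    rw [List.get_mk_zero]
    exact List.head?_eq_head (Dr.nonempty i)
  have headS : ∀ i, (Dr.paths i).get ⟨0, hlenpos i⟩ ∈ S := fun i => ⟨i, headsome i⟩
  have main : ∀ d : ℕ, ∃ n, ∃ l : Fin 3 → ℕ, (∀ i, 1 ≤ l i) ∧
      (∀ i, l i ≤ (Dr.paths i).length) ∧
      (∀ i (k : Fin (Dr.paths i).length), (k : ℕ) < l i →
        (Dr.paths i).get k ∈ coloredAt G S n) ∧
      min (∑ i, (Dr.paths i).length) (3 + d) ≤ ∑ i, l i := by
    intro d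
    induction d with
    | zero =>
      refine ⟨0, fun _ => 1, fun _ => le_rfl, fun i => hlenpos i, ?_, ?_⟩
      · intro i k hk
        have hk0 : k = ⟨0, hlenpos i⟩ := Fin.ext (by simpa using Nat.lt_one_iff.mp hk)
        rw [hk0]; exact headS i
      · have h3 : (∑ _i : Fin 3, 1) = 3 := by simp
        rw [h3]; exact min_le_right _ _
    | succ d ih =>
      obtain ⟨n, l, H1, H2, H3, H4⟩ := ih
      by_cases hall : ∀ i, l i = (Dr.paths i).length
      · refine ⟨n, l, H1, H2, H3, ?_⟩
        have hsum : ∑ i, l i = ∑ i, (Dr.paths i).length :=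
          Finset.sum_congr rfl (fun i _ => hall i)
        rw [hsum]; exact min_le_left _ _
      · push_neg at hall
        obtain ⟨i0, hi0'⟩ := hall
        have hi0 : l i0 < (Dr.paths i0).length := lt_of_le_of_ne (H2 i0) hi0'
        obtain ⟨i, hact, hnew⟩ := Dr.step S n l H1 H2 H3 i0 hi0
        refine ⟨n + 1, Function.update l i (l i + 1), ?_, ?_, ?_, ?_⟩
        · intro j; rcases eq_or_ne j i with rfl | hji
          · rw [Function.update_self]; omega
          · rw [Function.update_of_ne hji]; exact H1 j
        · intro j; rcases eq_or_ne j i with rfl | hji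
          · rw [Function.update_self]; exact hact
          · rw [Function.update_of_ne hji]; exact H2 j
        · intro j k hk; rcases eq_or_ne j i with rfl | hji
          · rw [Function.update_self] at hk; exact hnew k hk
          · rw [Function.update_of_ne hji] at hk
            exact coloredAt_mono G S (Nat.le_succ n) (H3 j k hk)
        · have hsum : ∑ j, Function.update l i (l i + 1) j = (∑ j, l j) + 1 := by
            rw [Finset.sum_update_of_mem (Finset.mem_univ i),
              Finset.sdiff_singleton_eq_erase,
              ← Finset.sum_erase_add Finset.univ l (Finset.mem_univ i)]
            ring
          rw [hsum]
          have m1 := min_le_left (∑ i, (Dr.paths i).length) (3 + (d + 1))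
          have m2 := min_le_right (∑ i, (Dr.paths i).length) (3 + (d + 1))
          rcases min_choice (∑ i, (Dr.paths i).length) (3 + d) with hm | hm <;>
            rw [hm] at H4 <;> omega
  intro v
  obtain ⟨n, l, H1, H2, H3, H4⟩ := main (∑ i, (Dr.paths i).length)
  have hall : ∀ i, l i = (Dr.paths i).length := by
    by_contra hne; push_neg at hne
    obtain ⟨i, hi⟩ := hne
    have hlt : l i < (Dr.paths i).length := lt_of_le_of_ne (H2 i) hi
    have hslt : ∑ j, l j < ∑ j, (Dr.paths j).length :=
      Finset.sum_lt_sum (fun j _ => H2 j) ⟨i, Finset.mem_univ i, hlt⟩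
    have hmin : min (∑ j, (Dr.paths j).length)
        (3 + ∑ j, (Dr.paths j).length) = ∑ j, (Dr.paths j).length :=
      min_eq_left (by omega)
    rw [hmin] at H4; omega
  obtain ⟨i, hvi⟩ := Dr.cover v
  obtain ⟨q, hq⟩ := List.mem_iff_get.mp hvi
  exact ⟨n, hq ▸ H3 i q (by rw [hall i]; exact q.isLt)⟩


/-- For any graph of 3-parallel paths, `F(G) ≤ 3`; moreover, the left-most
vertices of the three parallel paths in any standard drawing form a zero
forcing set. -/
theorem forcingNumber_le_three_of_parallelPaths {V : Type*} [Fintype V]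
    (G : SimpleGraph V) (h : IsGraphOfParallelPaths G 3) :
    forcingNumber G ≤ 3 ∧
      ∀ Dr : ParallelPathsDrawing G 3,
        IsForcingSet G {v | ∃ i, (Dr.paths i).head? = some v} := by

  classical
  refine ⟨?_, fun Dr => forcing_key G Dr⟩
  obtain ⟨Dr⟩ := h.1
  have hlenpos : ∀ i, 0 < (Dr.paths i).length := fun i =>
    List.length_pos_iff.mpr (Dr.nonempty i)
  set hd : Fin 3 → V := fun i => (Dr.paths i).get ⟨0, hlenpos i⟩ with hhd
  have hdmem : ∀ i, hd i ∈ Dr.paths i := fun i => List.get_mem _ _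
  have hdne : ∀ i j, i ≠ j → hd i ≠ hd j := fun i j hij he =>
    Dr.disjoint i j hij (hd i) (hdmem i) (he ▸ hdmem j)
  have headsome : ∀ i, (Dr.paths i).head? = some (hd i) := by
    intro i
    rw [hhd]; simp only
    rw [List.get_mk_zero]
    exact List.head?_eq_head (Dr.nonempty i)
  set F : Finset V := {hd 0, hd 1, hd 2} with hF
  have hcard : F.card = 3 := by
    rw [hF, Finset.card_insert_of_notMem (by
        simp only [Finset.mem_insert, Finset.mem_singleton]
        push_neg
        exact ⟨hdne 0 1 (by decide), hdne 0 2 (by decide)⟩),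
      Finset.card_insert_of_notMem (by
        simp only [Finset.mem_singleton]
        exact hdne 1 2 (by decide)),
      Finset.card_singleton]
  have hcoe : (↑F : Set V) = {v | ∃ i, (Dr.paths i).head? = some v} := by
    ext v
    simp only [hF, Finset.coe_insert, Finset.coe_singleton, Set.mem_insert_iff,
      Set.mem_singleton_iff, Set.mem_setOf_eq]
    constructor
    · rintro (rfl | rfl | rfl)
      exacts [⟨0, headsome 0⟩, ⟨1, headsome 1⟩, ⟨2, headsome 2⟩]
    · rintro ⟨i, hi⟩
      rw [headsome i] at hi
      have hv : v = hd i := (Option.some_injective _ hi).symm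
      fin_cases i
      · exact Or.inl hv
      · exact Or.inr (Or.inl hv)
      · exact Or.inr (Or.inr hv)
  exact Nat.sInf_le ⟨F, hcard, by rw [hcoe]; exact forcing_key G Dr⟩
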